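/- Let 0 ≤ r < 1 < R and let U = {z ∈ ℂ : r < |z| < R} be the open annulus. If f : U → ℂ is continuous on U and complex differentiable (holomorphic) at every point of U \ 𝕊, then f is holomorphic on all of U. -/

import Mathlib

/-!
Fix radii `r < a < 1 < b < R`. The annular Cauchy integral
`g w = (2πi)⁻¹ (∮_{|z|=b} f z / (z - w) dz - ∮_{|z|=a} f z / (z - w) dz)` is holomorphic off the
two circles. Split the annulus `a ≤ |z| ≤ b` along the unit circle: for `w` off the unit circle,
Cauchy's formula on the half containing `w` and the Cauchy–Goursat theorem on the other half (both
only need `f` continuous up to the boundary of the half) give `g w = f w`. Since the unit circle has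
empty interior, continuity extends `g = f` to all of `a < |w| < b`, so `f` is holomorphic there.
-/

open Metric Real Complex Set Filter Topology MeasureTheory

theorem sphere_subset_closedBall_sdiff_ball {α : Type*} [PseudoMetricSpace α] {c : α}
    {a ρ b : ℝ} (haρ : a ≤ ρ) (hρb : ρ ≤ b) : sphere c ρ ⊆ closedBall c b \ ball c a :=
  fun _ hz => ⟨(mem_sphere.1 hz).trans_le hρb,
    fun h => (mem_ball.1 h).not_ge ((mem_sphere.1 hz).symm ▸ haρ)⟩

theorem ball_sdiff_closedBall_subset_closedBall_sdiff_ball {α : Type*} [PseudoMetricSpace α]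
    {c : α} {a b : ℝ} : ball c b \ closedBall c a ⊆ closedBall c b \ ball c a :=
  sdiff_subset_sdiff ball_subset_closedBall ball_subset_closedBall

variable {E : Type*} [NormedAddCommGroup E] [NormedSpace ℂ E]

theorem differentiableAt_circleIntegral_sub_inv_smul {f : ℂ → E} {c w₀ : ℂ} {R : ℝ}
    (hR : 0 ≤ R) (hf : ContinuousOn f (sphere c R)) (hw₀ : w₀ ∉ sphere c R) :
    DifferentiableAt ℂ (fun w => ∮ z in C(c, R), (z - w)⁻¹ • f z) w₀ := by
  set δ := |dist w₀ c - R| / 2 with hδ_def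
  have hδ : 0 < δ := half_pos (abs_pos.2 (sub_ne_zero.2 hw₀))
  have hw₀δ : w₀ ∈ ball w₀ δ := mem_ball_self hδ
  have hsep : ∀ θ, ∀ w ∈ ball w₀ δ, δ ≤ ‖circleMap c R θ - w‖ := by
    intro θ w hw
    have h₁ := abs_dist_sub_le w₀ (circleMap c R θ) c
    have h₂ := dist_triangle w₀ w (circleMap c R θ)
    rw [show dist (circleMap c R θ) c = R from circleMap_mem_sphere c hR θ] at h₁
    rw [mem_ball, dist_comm] at hw
    rw [← dist_eq_norm, dist_comm]
    linarith
  have hne : ∀ θ, ∀ w ∈ ball w₀ δ, circleMap c R θ - w ≠ 0 := fun θ w hw =>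
    norm_pos_iff.mp (hδ.trans_le (hsep θ w hw))
  obtain ⟨C, hC⟩ := (isCompact_sphere c R).exists_bound_of_continuousOn hf
  have hfθ : Continuous fun θ => f (circleMap c R θ) :=
    hf.comp_continuous (continuous_circleMap c R) (circleMap_mem_sphere c hR)
  have hk : Continuous fun θ => circleMap 0 R θ * I := by fun_prop
  have key := intervalIntegral.hasDerivAt_integral_of_dominated_loc_of_deriv_le
    (F := fun w θ => (circleMap 0 R θ * I) • (circleMap c R θ - w)⁻¹ • f (circleMap c R θ))
    (F' := fun w θ =>
      (circleMap 0 R θ * I) • ((circleMap c R θ - w) ^ 2)⁻¹ • f (circleMap c R θ))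
    (bound := fun _ => R * ((δ ^ 2)⁻¹ * C)) (μ := volume) (a := 0) (b := 2 * π)
    (ball_mem_nhds w₀ hδ) ?_ ?_ ?_ ?_ intervalIntegrable_const ?_
  · simpa only [circleIntegral, deriv_circleMap] using key.2.differentiableAt
  · filter_upwards [ball_mem_nhds w₀ hδ] with w hw
    exact (hk.smul ((((continuous_circleMap c R).sub continuous_const).inv₀
      fun θ => hne θ w hw).smul hfθ)).aestronglyMeasurable
  · exact (hk.smul ((((continuous_circleMap c R).sub continuous_const).inv₀
      fun θ => hne θ w₀ hw₀δ).smul hfθ)).intervalIntegrable _ _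
  · exact (hk.smul (((((continuous_circleMap c R).sub continuous_const).pow 2).inv₀
      fun θ => pow_ne_zero 2 (hne θ w₀ hw₀δ)).smul hfθ)).aestronglyMeasurable
  · refine ae_of_all _ fun θ _ w hw => ?_
    rw [norm_smul, norm_smul, norm_mul, norm_circleMap_zero, norm_I, mul_one, abs_of_nonneg hR,
      norm_inv, norm_pow]
    gcongr
    · exact hsep θ w hw
    · exact hC _ (circleMap_mem_sphere c hR θ)
  · refine ae_of_all _ fun θ _ w hw => ?_
    have h : HasDerivAt (fun w => (circleMap c R θ - w)⁻¹) ((circleMap c R θ - w) ^ 2)⁻¹ w := by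
      simpa using ((hasDerivAt_id w).const_sub (circleMap c R θ)).fun_inv (hne θ w hw)
    exact (h.smul_const _).const_smul _

noncomputable def annulusCauchyIntegral (f : ℂ → E) (c : ℂ) (a b : ℝ) (w : ℂ) : E :=
  (2 * π * I : ℂ)⁻¹ •
    ((∮ z in C(c, b), (z - w)⁻¹ • f z) - ∮ z in C(c, a), (z - w)⁻¹ • f z)

theorem annulusCauchyIntegral_add (f : ℂ → E) (c : ℂ) (a ρ b : ℝ) (w : ℂ) :
    annulusCauchyIntegral f c a ρ w + annulusCauchyIntegral f c ρ b w =
      annulusCauchyIntegral f c a b w := by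
  simp only [annulusCauchyIntegral, ← smul_add]
  congr 1
  abel

theorem differentiableAt_annulusCauchyIntegral {f : ℂ → E} {c w : ℂ} {a b : ℝ} (ha : 0 ≤ a)
    (hb : 0 ≤ b) (hfa : ContinuousOn f (sphere c a)) (hfb : ContinuousOn f (sphere c b))
    (hwa : w ∉ sphere c a) (hwb : w ∉ sphere c b) :
    DifferentiableAt ℂ (annulusCauchyIntegral f c a b) w :=
  ((differentiableAt_circleIntegral_sub_inv_smul hb hfb hwb).sub
    (differentiableAt_circleIntegral_sub_inv_smul ha hfa hwa)).const_smul _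

theorem annulusCauchyIntegral_eq_zero_of_notMem {f : ℂ → E} {c w : ℂ} {a b : ℝ} (ha : 0 < a)
    (hab : a ≤ b) (hc : ContinuousOn f (closedBall c b \ ball c a))
    (hd : DifferentiableOn ℂ f (ball c b \ closedBall c a))
    (hw : w ∉ closedBall c b \ ball c a) :
    annulusCauchyIntegral f c a b w = 0 := by
  have hO : IsOpen (ball c b \ closedBall c a) := isOpen_ball.sdiff isClosed_closedBall
  have hne : ∀ z ∈ closedBall c b \ ball c a, z - w ≠ 0 := fun z hz =>
    sub_ne_zero.2 (ne_of_mem_of_not_mem hz hw)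
  rw [annulusCauchyIntegral, circleIntegral_eq_of_differentiable_on_annulus_off_countable
    (f := fun z => (z - w)⁻¹ • f z) ha hab countable_empty
    (((continuousOn_id.sub continuousOn_const).inv₀ hne).fun_smul hc)
    fun z hz => ((differentiableAt_id.sub_const w).inv
      (hne z (ball_sdiff_closedBall_subset_closedBall_sdiff_ball hz.1))).smul
      (hd.differentiableAt (hO.mem_nhds hz.1)), sub_self, smul_zero]

variable [CompleteSpace E]

theorem circleIntegral_dslope {f : ℂ → E} {c w : ℂ} {R : ℝ} (hR : 0 ≤ R)
    (hf : ContinuousOn f (sphere c R)) (hw : w ∉ sphere c R) :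
    (∮ z in C(c, R), dslope f w z) =
      (∮ z in C(c, R), (z - w)⁻¹ • f z) - (∮ z in C(c, R), (z - w)⁻¹) • f w := by
  have hne : ∀ z ∈ sphere c R, z ≠ w := fun z hz => ne_of_mem_of_not_mem hz hw
  have hinv : ContinuousOn (fun z => (z - w)⁻¹) (sphere c R) :=
    (continuousOn_id.sub continuousOn_const).inv₀ fun z hz => sub_ne_zero.2 (hne z hz)
  calc (∮ z in C(c, R), dslope f w z)
      = ∮ z in C(c, R), ((z - w)⁻¹ • f z - (z - w)⁻¹ • f w) :=
        circleIntegral.integral_congr hR fun z hz => by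
          simp only [dslope_of_ne f (hne z hz), slope_def_module, smul_sub]
    _ = _ := by
      rw [circleIntegral.integral_sub ((hinv.fun_smul hf).circleIntegrable hR)
        ((hinv.fun_smul continuousOn_const).circleIntegrable hR),
        circleIntegral.integral_smul_const]

theorem annulusCauchyIntegral_eq_of_mem {f : ℂ → E} {c w : ℂ} {a b : ℝ} (ha : 0 < a)
    (hc : ContinuousOn f (closedBall c b \ ball c a))
    (hd : DifferentiableOn ℂ f (ball c b \ closedBall c a))
    (hw : w ∈ ball c b \ closedBall c a) :
    annulusCauchyIntegral f c a b w = f w := by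
  have haw : a < dist w c := lt_of_not_ge hw.2
  have hwb : dist w c < b := hw.1
  have hab : a ≤ b := (haw.trans hwb).le
  have hO : IsOpen (ball c b \ closedBall c a) := isOpen_ball.sdiff isClosed_closedBall
  have hdF : DifferentiableOn ℂ (dslope f w) (ball c b \ closedBall c a) :=
    (differentiableOn_dslope (hO.mem_nhds hw)).2 hd
  have hcF : ContinuousOn (dslope f w) (closedBall c b \ ball c a) :=
    (continuousOn_dslope (mem_of_superset (hO.mem_nhds hw)
      ball_sdiff_closedBall_subset_closedBall_sdiff_ball)).2
      ⟨hc, hd.differentiableAt (hO.mem_nhds hw)⟩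
  have hF := circleIntegral_eq_of_differentiable_on_annulus_off_countable ha hab countable_empty
    hcF fun z hz => hdF.differentiableAt (hO.mem_nhds hz.1)
  have hinv_a : (∮ z in C(c, a), (z - w)⁻¹) = 0 :=
    circleIntegral_eq_zero_of_differentiable_on_off_countable ha.le countable_empty
      ((continuousOn_id.sub continuousOn_const).inv₀ fun z hz =>
        sub_ne_zero.2 (ne_of_mem_of_not_mem hz hw.2))
      fun z hz => (differentiableAt_id.sub_const w).inv
        (sub_ne_zero.2 (ne_of_mem_of_not_mem (ball_subset_closedBall hz.1) hw.2))
  rw [circleIntegral_dslope (ha.trans_le hab).le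
      (hc.mono (sphere_subset_closedBall_sdiff_ball hab le_rfl)) hwb.ne,
    circleIntegral_dslope ha.le (hc.mono (sphere_subset_closedBall_sdiff_ball le_rfl hab)) haw.ne',
    circleIntegral.integral_sub_inv_of_mem_ball hw.1, hinv_a, zero_smul, sub_zero,
    sub_eq_iff_eq_add'] at hF
  rw [annulusCauchyIntegral, hF, add_sub_cancel_right, inv_smul_smul₀ two_pi_I_ne_zero]

theorem annulusCauchyIntegral_eq_of_mem_sdiff_sphere {f : ℂ → E} {c w : ℂ} {a ρ b : ℝ}
    (ha : 0 < a) (haρ : a < ρ) (hρb : ρ < b) (hc : ContinuousOn f (closedBall c b \ ball c a))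
    (hd : DifferentiableOn ℂ f ((ball c b \ closedBall c a) \ sphere c ρ))
    (hw : w ∈ (ball c b \ closedBall c a) \ sphere c ρ) :
    annulusCauchyIntegral f c a b w = f w := by
  have hc_in : ContinuousOn f (closedBall c ρ \ ball c a) :=
    hc.mono (sdiff_subset_sdiff_left (closedBall_subset_closedBall hρb.le))
  have hc_out : ContinuousOn f (closedBall c b \ ball c ρ) :=
    hc.mono (sdiff_subset_sdiff_right (ball_subset_ball haρ.le))
  have hd_in : DifferentiableOn ℂ f (ball c ρ \ closedBall c a) := hd.mono fun z hz =>
    ⟨⟨ball_subset_ball hρb.le hz.1, hz.2⟩, fun h => (mem_ball.1 hz.1).ne (mem_sphere.1 h)⟩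
  have hd_out : DifferentiableOn ℂ f (ball c b \ closedBall c ρ) := hd.mono fun z hz =>
    ⟨⟨hz.1, fun h => hz.2 (closedBall_subset_closedBall haρ.le h)⟩,
      fun h => hz.2 (sphere_subset_closedBall h)⟩
  rw [← annulusCauchyIntegral_add f c a ρ b]
  rcases lt_or_gt_of_ne (hw.2 : dist w c ≠ ρ) with hwρ | hwρ
  · rw [annulusCauchyIntegral_eq_of_mem ha hc_in hd_in ⟨hwρ, hw.1.2⟩,
      annulusCauchyIntegral_eq_zero_of_notMem (ha.trans haρ) hρb.le hc_out hd_out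
        fun h => h.2 hwρ, add_zero]
  · rw [annulusCauchyIntegral_eq_zero_of_notMem ha haρ.le hc_in hd_in fun h => hwρ.not_ge h.1,
      annulusCauchyIntegral_eq_of_mem (ha.trans haρ) hc_out hd_out ⟨hw.1.1, hwρ.not_ge⟩,
      zero_add]

theorem differentiableOn_annulus_of_differentiableOn_sdiff_sphere {f : ℂ → E} {c : ℂ}
    {r ρ R : ℝ} (hρ : 0 < ρ) (hrρ : r < ρ) (hρR : ρ < R)
    (hc : ContinuousOn f (ball c R \ closedBall c r))
    (hd : DifferentiableOn ℂ f ((ball c R \ closedBall c r) \ sphere c ρ)) :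
    DifferentiableOn ℂ f (ball c R \ closedBall c r) := by
  intro z hz
  by_cases hzρ : z ∉ sphere c ρ
  · have hUS : IsOpen ((ball c R \ closedBall c r) \ sphere c ρ) :=
      (isOpen_ball.sdiff isClosed_closedBall).sdiff isClosed_sphere
    exact (hd.differentiableAt (hUS.mem_nhds ⟨hz, hzρ⟩)).differentiableWithinAt
  rw [not_not, mem_sphere] at hzρ
  obtain ⟨a, hra, haρ⟩ := exists_between (max_lt hrρ hρ)
  obtain ⟨b, hρb, hbR⟩ := exists_between hρR
  have hr : r < a := (le_max_left r 0).trans_lt hra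
  have ha : 0 < a := (le_max_right r 0).trans_lt hra
  set V := ball c b \ closedBall c a
  have hVopen : IsOpen V := isOpen_ball.sdiff isClosed_closedBall
  have hzV : z ∈ V := ⟨hzρ.trans_lt hρb, fun h => haρ.not_ge (hzρ.symm.trans_le h)⟩
  have hK : closedBall c b \ ball c a ⊆ ball c R \ closedBall c r := fun w hw =>
    ⟨(mem_closedBall.1 hw.1).trans_lt hbR,
      fun h => hw.2 (mem_ball.2 ((mem_closedBall.1 h).trans_lt hr))⟩
  have hVU : V ⊆ ball c R \ closedBall c r :=
    ball_sdiff_closedBall_subset_closedBall_sdiff_ball.trans hK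
  set g := annulusCauchyIntegral f c a b
  have hg : DifferentiableOn ℂ g V := fun w hw =>
    (differentiableAt_annulusCauchyIntegral ha.le (ha.trans (haρ.trans hρb)).le
      (hc.mono ((sphere_subset_closedBall_sdiff_ball le_rfl (haρ.trans hρb).le).trans hK))
      (hc.mono ((sphere_subset_closedBall_sdiff_ball (haρ.trans hρb).le le_rfl).trans hK))
      (fun h => hw.2 (sphere_subset_closedBall h))
      fun h => (mem_ball.1 hw.1).ne (mem_sphere.1 h)).differentiableWithinAt
  have hfg : EqOn f g (V \ sphere c ρ) := fun w hw =>
    (annulusCauchyIntegral_eq_of_mem_sdiff_sphere ha haρ hρb (hc.mono hK)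
      (hd.mono (sdiff_subset_sdiff_left hVU)) hw).symm
  have hdense : Dense (sphere c ρ)ᶜ :=
    interior_eq_empty_iff_dense_compl.1 (interior_sphere c hρ.ne')
  have hfgV : EqOn f g V := hfg.of_subset_closure (hc.mono hVU) hg.continuousOn sdiff_subset
    (hdense.open_subset_closure_inter hVopen)
  exact ((hg.differentiableAt (hVopen.mem_nhds hzV)).congr_of_eventuallyEq
    (eventuallyEq_of_mem (hVopen.mem_nhds hzV) hfgV)).differentiableWithinAt

theorem stmt_0 (r R : ℝ) (hr1 : r < 1) (hR : 1 < R) (f : ℂ → ℂ)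
    (hcont : ContinuousOn f {z : ℂ | r < ‖z‖ ∧ ‖z‖ < R})
    (hdiff : ∀ z : ℂ, r < ‖z‖ → ‖z‖ < R → ‖z‖ ≠ 1 → DifferentiableAt ℂ f z) :
    ∀ z : ℂ, r < ‖z‖ → ‖z‖ < R → DifferentiableAt ℂ f z := by
  intro z hzr hzR
  have hU : {z : ℂ | r < ‖z‖ ∧ ‖z‖ < R} = ball 0 R \ closedBall 0 r := by
    ext
    simp [and_comm]
  have hd : DifferentiableOn ℂ f ((ball 0 R \ closedBall 0 r) \ sphere 0 1) := fun w hw => by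
    rw [← hU] at hw
    exact (hdiff w hw.1.1 hw.1.2 (by simpa using hw.2)).differentiableWithinAt
  exact (differentiableOn_annulus_of_differentiableOn_sdiff_sphere one_pos hr1 hR (hU ▸ hcont)
    hd).differentiableAt ((isOpen_ball.sdiff isClosed_closedBall).mem_nhds (hU ▸ ⟨hzr, hzR⟩))
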